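/- Let A ⊆ ℕ₀ be a finite 3-free set, S(A) the Stanley sequence generated by A, and S(A,x) its counting function. Then for every ε > 0 there exists x₀ = x₀(ε, A) such that for all x ≥ x₀, S(A,x) ≥ (√2 − ε)√x. -/

import Mathlib

/-!
Since `A`, and hence every initial segment of `S(A)`, is 3-free, an integer `n > max A` is left
out of `S(A)` only because it would close a progression: `n = 2b - a` for some `a < b` in
`S(A)`. Hence every `n ≤ x` beyond `max A` is either counted by `k = S(A,x)` or is the image of
one of the at most `k(k+1)/2` unordered pairs from `S(A) ∩ [0, x]` under
`{a, b} ↦ 2 max a b - min a b`. This gives `x ≲ k²/2`, i.e. `k ≳ √(2x)`.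
-/

/-- A set of nonnegative integers is 3-free if it contains no three-term
arithmetic progression `a < b < c` with `a + c = 2b`. -/
def ThreeFree (S : Set ℕ) : Prop :=
  ∀ a ∈ S, ∀ b ∈ S, ∀ c ∈ S, a < b → b < c → a + c ≠ 2 * b

/-- `stanleyBelow A n` is the set of elements of the Stanley sequence generated by `A`
that are smaller than `n`: at stage `n` we include `n` itself if `n ∈ A`, or if `n`
exceeds every element of `A` and adjoining `n` to everything chosen so far stays 3-free
(the greedy rule). -/
def stanleyBelow (A : Finset ℕ) : ℕ → Set ℕ
  | 0 => ∅
  | n + 1 => stanleyBelow A n ∪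
      {m | m = n ∧ (n ∈ A ∨ ((∀ a ∈ A, a < n) ∧ ThreeFree (stanleyBelow A n ∪ {n})))}

/-- The Stanley sequence `S(A)` generated by `A`, as a set of nonnegative integers. -/
def stanley (A : Finset ℕ) : Set ℕ := ⋃ n, stanleyBelow A n

/-- The counting function `S(A,x) = #{s ∈ S(A) : s ≤ x}`. -/
noncomputable def stanleyCount (A : Finset ℕ) (x : ℝ) : ℕ :=
  Nat.card {s : ℕ | s ∈ stanley A ∧ (s : ℝ) ≤ x}

/-- `H S n = #{(s₁,s₂) : s₁,s₂ ∈ S, s₁ < s₂, n = 2s₂ - s₁}`. -/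
noncomputable def H (S : Set ℕ) (n : ℕ) : ℕ :=
  Nat.card {p : ℕ × ℕ | p.1 ∈ S ∧ p.2 ∈ S ∧ p.1 < p.2 ∧ n + p.1 = 2 * p.2}

open Finset

theorem ThreeFree.mono {S T : Set ℕ} (hT : ThreeFree T) (h : S ⊆ T) : ThreeFree S :=
  fun a ha b hb c hc => hT a (h ha) b (h hb) c (h hc)

theorem ThreeFree.exists_of_not_union_singleton {S : Set ℕ} {n : ℕ} (hS : ThreeFree S)
    (hlt : ∀ s ∈ S, s < n) (h : ¬ ThreeFree (S ∪ {n})) :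
    ∃ a ∈ S, ∃ b ∈ S, a < b ∧ n + a = 2 * b := by
  simp only [ThreeFree, Set.mem_union, Set.mem_singleton_iff, not_forall, not_not] at h
  obtain ⟨a, ha, b, hb, c, hc, hab, hbc, habc⟩ := h
  have hcn : c ≤ n := hc.elim (fun hc => (hlt c hc).le) le_of_eq
  replace ha : a ∈ S := ha.resolve_right (by omega)
  replace hb : b ∈ S := hb.resolve_right (by omega)
  rcases hc with hc | rfl
  · exact absurd habc (hS a ha b hb c hc hab hbc)
  · exact ⟨a, ha, b, hb, hab, by omega⟩

section Stanley

variable {A : Finset ℕ}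

theorem lt_of_mem_stanleyBelow {n m : ℕ} (h : m ∈ stanleyBelow A n) : m < n := by
  induction n with
  | zero => exact absurd h (by simp [stanleyBelow])
  | succ n ih =>
    rcases h with h | ⟨rfl, -⟩
    · exact (ih h).trans n.lt_succ_self
    · exact m.lt_succ_self

theorem mem_or_forall_lt_of_mem_stanleyBelow {n m : ℕ} (h : m ∈ stanleyBelow A n) :
    m ∈ A ∨ ∀ a ∈ A, a < m := by
  induction n with
  | zero => exact absurd h (by simp [stanleyBelow])
  | succ n ih =>
    rcases h with h | ⟨rfl, h | h⟩
    · exact ih h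
    · exact Or.inl h
    · exact Or.inr h.1

theorem stanleyBelow_succ_subset (n : ℕ) : stanleyBelow A (n + 1) ⊆ stanleyBelow A n ∪ {n} :=
  Set.union_subset_union_right _ fun _ hm => hm.1

theorem threeFree_stanleyBelow (hA : ThreeFree ↑A) (n : ℕ) : ThreeFree (stanleyBelow A n) := by
  induction n with
  | zero => simp [ThreeFree, stanleyBelow]
  | succ n ih =>
    by_cases hn : n ∈ A ∨ ((∀ a ∈ A, a < n) ∧ ThreeFree (stanleyBelow A n ∪ {n}))
    · rcases hn with hn | hn
      -- nothing below an element of `A` can exceed all of `A`, so we are still inside `A`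
      · refine hA.mono fun m hm => ?_
        exact (mem_or_forall_lt_of_mem_stanleyBelow hm).resolve_right fun h =>
          (h n hn).not_ge (Nat.lt_succ_iff.mp (lt_of_mem_stanleyBelow hm))
      · exact hn.2.mono (stanleyBelow_succ_subset n)
    · exact ih.mono fun m hm => hm.elim id fun h => absurd h.2 hn

theorem exists_ap_of_not_mem_stanley (hA : ThreeFree ↑A) {n : ℕ} (hlt : ∀ a ∈ A, a < n)
    (hn : n ∉ stanley A) :
    ∃ a ∈ stanley A, ∃ b ∈ stanley A, a < b ∧ n + a = 2 * b := by
  have hfree : ¬ ThreeFree (stanleyBelow A n ∪ {n}) := fun h =>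
    hn (Set.mem_iUnion.mpr ⟨n + 1, Or.inr ⟨rfl, Or.inr ⟨hlt, h⟩⟩⟩)
  obtain ⟨a, ha, b, hb, hab, h⟩ := (threeFree_stanleyBelow hA n).exists_of_not_union_singleton
    (fun _ => lt_of_mem_stanleyBelow) hfree
  exact ⟨a, Set.mem_iUnion.mpr ⟨n, ha⟩, b, Set.mem_iUnion.mpr ⟨n, hb⟩, hab, h⟩

end Stanley

section Counting

variable {S : Set ℕ} {M : ℕ}

theorem succ_le_add_card_add_choose [DecidablePred (· ∈ S)]
    (hS : ∀ n, M ≤ n → n ∉ S → ∃ a ∈ S, ∃ b ∈ S, a < b ∧ n + a = 2 * b) (N : ℕ) :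
    N + 1 ≤ M + ((Iic N).filter (· ∈ S)).card
      + (((Iic N).filter (· ∈ S)).card + 1).choose 2 := by
  set K := (Iic N).filter (· ∈ S)
  let g : Sym2 ℕ → ℕ := Sym2.lift ⟨fun a b => 2 * max a b - min a b, fun a b => by
    simp only [max_comm, min_comm]⟩
  have hcover : Iic N ⊆ range M ∪ K ∪ K.sym2.image g := by
    intro n hn
    have hnN : n ≤ N := mem_Iic.mp hn
    simp only [mem_union, mem_range, mem_image, Sym2.exists, mk_mem_sym2_iff, K, mem_filter,
      mem_Iic]
    by_cases hMn : n < M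
    · exact Or.inl (Or.inl hMn)
    by_cases hnS : n ∈ S
    · exact Or.inl (Or.inr ⟨hnN, hnS⟩)
    obtain ⟨a, ha, b, hb, hab, h⟩ := hS n (not_lt.mp hMn) hnS
    exact Or.inr ⟨a, b, ⟨⟨by omega, ha⟩, ⟨by omega, hb⟩⟩, by simp [g, Sym2.lift_mk]; omega⟩
  calc N + 1 = (Iic N).card := (Nat.card_Iic N).symm
    _ ≤ (range M ∪ K ∪ K.sym2.image g).card := card_le_card hcover
    _ ≤ M + K.card + (K.card + 1).choose 2 := by
      grw [card_union_le, card_union_le, card_range, card_image_le, card_sym2]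

theorem sqrt_two_mul_sqrt_sub_le_card
    (hS : ∀ n, M ≤ n → n ∉ S → ∃ a ∈ S, ∃ b ∈ S, a < b ∧ n + a = 2 * b) {x : ℝ} (hx : 0 ≤ x) :
    √2 * √x - (√(2 * M) + 2) ≤ Nat.card {s | s ∈ S ∧ (s : ℝ) ≤ x} := by
  classical
  set K := (Iic ⌊x⌋₊).filter (· ∈ S)
  have hcard : Nat.card {s | s ∈ S ∧ (s : ℝ) ≤ x} = K.card := by
    rw [← Nat.card_eq_finsetCard]
    congr
    ext s
    simp [K, Nat.le_floor_iff hx, and_comm]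
  have hcount := succ_le_add_card_add_choose hS ⌊x⌋₊
  have hcountℝ : 2 * x ≤ 2 * M + ((K.card : ℝ) + 2) ^ 2 := by
    have hxlt := Nat.lt_floor_add_one x
    have hchoose := Nat.cast_choose_two ℝ (K.card + 1)
    have hcount' : ((⌊x⌋₊ + 1 : ℕ) : ℝ) ≤ (M + K.card + (K.card + 1).choose 2 : ℕ) :=
      mod_cast hcount
    push_cast at hchoose hcount'
    nlinarith
  rw [hcard, ← Real.sqrt_mul zero_le_two]
  have h2M := Real.sq_sqrt (by positivity : (0 : ℝ) ≤ 2 * M)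
  have : √(2 * x) ≤ √(2 * M) + (K.card + 2) := Real.sqrt_le_iff.mpr
    ⟨by positivity, by nlinarith [Real.sqrt_nonneg (2 * M), K.card.cast_nonneg (α := ℝ)]⟩
  linarith

end Counting

theorem exists_forall_le_of_mul_sqrt_sub_le {f : ℝ → ℝ} {c C : ℝ}
    (hf : ∀ x, 0 ≤ x → c * √x - C ≤ f x) {ε : ℝ} (hε : 0 < ε) :
    ∃ x₀, ∀ x, x₀ ≤ x → (c - ε) * √x ≤ f x := by
  refine ⟨(C / ε) ^ 2, fun x hx => ?_⟩
  have hC : C ≤ ε * √x := by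
    have := (le_abs_self _).trans (Real.abs_le_sqrt hx)
    rwa [div_le_iff₀' hε] at this
  linarith [hf x ((sq_nonneg _).trans hx)]

/-- for every `ε > 0` there is `x₀` such that
`S(A,x) ≥ (√2 - ε)√x` for all `x ≥ x₀`. -/
theorem count_ge_sqrt_two_sub_eps (A : Finset ℕ) (hA3 : ThreeFree ↑A) :
    ∀ ε : ℝ, 0 < ε → ∃ x₀ : ℝ, ∀ x : ℝ, x₀ ≤ x →
      (Real.sqrt 2 - ε) * Real.sqrt x ≤ (stanleyCount A x : ℝ) := by
  obtain ⟨M, hM⟩ := A.exists_nat_subset_range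
  have hblocked (n : ℕ) (hMn : M ≤ n) (hn : n ∉ stanley A) :
      ∃ a ∈ stanley A, ∃ b ∈ stanley A, a < b ∧ n + a = 2 * b :=
    exists_ap_of_not_mem_stanley hA3 (fun a ha => (mem_range.mp (hM ha)).trans_le hMn) hn
  exact fun ε hε => exists_forall_le_of_mul_sqrt_sub_le
    (fun x hx => sqrt_two_mul_sqrt_sub_le_card hblocked hx) hε
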